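/- arXiv:2605.01435 — 4 statements merged into one kernel-verified Lean document; each statement's English description precedes it below -/
import Mathlib

section
/- For n ≥ 1 and 1 ≤ t ≤ F_n, the t-th letter of the word C_n (the Fibonacci-substitution word with C₁ = (1), C_{n+1} = σ(C_n)) equals ⌊(F_{n+1}+t+1)φ⌋ − ⌊(F_{n+1}+t)φ⌋, where φ = (1+√5)/2. -/
noncomputable def phi : ℝ := (1 + Real.sqrt 5) / 2

/-- The substitution σ: 1 ↦ (2), 2 ↦ (2,1). -/
def subst : ℕ → List ℕ
  | 1 => [2]
  | 2 => [2, 1]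
  | _ => []

/-- `fibWord n` is the Fibonacci-substitution word `C_{n+1}` (so `fibWord 0 = C₁ = [1]`). -/
def fibWord : ℕ → List ℕ
  | 0 => [1]
  | n + 1 => (fibWord n).flatMap subst

/-- `cseq k n` is the `n`-th term (1-indexed) of the concatenation
    `C₁^(k) ⊎ C₂^(k) ⊎ …` of `k`-fold repetitions of the Fibonacci-substitution words. -/
def cseq (k n : ℕ) : ℕ :=
  ((List.range n).flatMap fun i => (List.replicate k (fibWord i)).flatten).getD (n - 1) 0

/-- `aseq k n = (k+1) + Σ_{i=1}^{n-1} c_i`. -/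
def aseq (k n : ℕ) : ℕ := (k + 1) + ∑ i ∈ Finset.Ico 1 n, cseq k i

/-- `bseq k n = (2k+2) + Σ_{i=1}^{n-1} (c_i + 1)`. -/
def bseq (k n : ℕ) : ℕ := (2 * k + 2) + ∑ i ∈ Finset.Ico 1 n, (cseq k i + 1)

noncomputable def psi : ℝ := (1 - Real.sqrt 5) / 2

lemma sqrt5_sq : Real.sqrt 5 ^ 2 = 5 := Real.sq_sqrt (by norm_num)
lemma sqrt5_lt : Real.sqrt 5 < 2.25 := by nlinarith [sqrt5_sq, Real.sqrt_nonneg 5]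
lemma sqrt5_gt : (2:ℝ) < Real.sqrt 5 := by nlinarith [sqrt5_sq, Real.sqrt_nonneg 5]

lemma psi_neg : psi < 0 := by unfold psi; nlinarith [sqrt5_gt]
lemma psi_gt : -1 < psi := by unfold psi; nlinarith [sqrt5_lt]

lemma fib_phi : ∀ k : ℕ, (Nat.fib k : ℝ) * phi + psi ^ k = Nat.fib (k+1)
  | 0 => by simp
  | 1 => by
      simp [phi, psi]
  | (k+2) => by
      have h1 := fib_phi k
      have h2 := fib_phi (k+1)
      have hpsi : psi ^ 2 = psi + 1 := by unfold psi; nlinarith [sqrt5_sq]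
      have : (Nat.fib (k+2) : ℝ) = Nat.fib k + Nat.fib (k+1) := by
        rw [Nat.fib_add_two]; push_cast; ring
      have h3 : (Nat.fib (k+3) : ℝ) = Nat.fib (k+1) + Nat.fib (k+2) := by
        rw [show k+3 = (k+1)+2 by ring, Nat.fib_add_two]; push_cast; ring
      rw [this, h3]
      have : psi ^ (k+2) = psi ^ k * (psi + 1) := by rw [← hpsi]; ring
      rw [this, pow_succ] at *
      linear_combination h1 + h2

lemma cassini : ∀ k : ℕ, (Nat.fib (k+2) : ℤ) * Nat.fib k - (Nat.fib (k+1))^2 = (-1)^(k+1)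
  | 0 => by simp
  | (k+1) => by
      have ih := cassini k
      have h2 : (Nat.fib (k+2) : ℤ) = Nat.fib k + Nat.fib (k+1) := by
        rw [Nat.fib_add_two]; push_cast; ring
      have h3 : (Nat.fib (k+3) : ℤ) = Nat.fib (k+1) + Nat.fib (k+2) := by
        rw [show k+3 = (k+1)+2 by ring, Nat.fib_add_two]; push_cast; ring
      linear_combination -ih + (Nat.fib (k+1):ℤ) * h3 - (Nat.fib (k+2):ℤ) * h2

lemma phi_irrational : Irrational phi := by
  have h5 : Irrational (Real.sqrt 5) := by
    rw [show (5:ℝ) = ((5:ℕ):ℝ) by norm_num]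
    exact irrational_sqrt_natCast_iff.mpr (by rintro ⟨x, hx⟩; rcases (by omega : x ≤ 2 ∨ 3 ≤ x) with h | h <;> nlinarith)
  have h1 : Irrational ((1:ℚ) + Real.sqrt 5) := h5.ratCast_add 1
  have h2 : Irrational (((1:ℚ) + Real.sqrt 5) / (2:ℕ)) := h1.div_natCast (by norm_num)
  have : phi = ((1:ℚ) + Real.sqrt 5) / (2:ℕ) := by unfold phi; norm_num
  rwa [this]

lemma mul_phi_ne_int (m : ℕ) (hm : 1 ≤ m) (z : ℤ) : (m:ℝ) * phi ≠ z := by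
  exact (phi_irrational.natCast_mul (by omega)).ne_int z

lemma norm_bound (k s : ℕ) (p : ℤ) (hs1 : 1 ≤ s) (hs2 : s + 1 ≤ Nat.fib (k+1)) :
    (-psi) ^ k ≤ |(s:ℝ) * phi - p| := by
  set a : ℤ := (-1)^(k+1) * ((p * Nat.fib k) - s * Nat.fib (k+1)) with ha
  set b : ℤ := (-1)^(k+1) * ((s:ℤ) * Nat.fib (k+2) - p * Nat.fib (k+1)) with hb
  have hcas := cassini k
  have hseq : a * Nat.fib (k+1) + b * Nat.fib k = s := by
    rw [ha, hb]
    have hsq : ((-1:ℤ)^(k+1)) * ((-1:ℤ)^(k+1)) = 1 := by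
      rw [← pow_add, show (k+1)+(k+1) = 2*(k+1) by ring, pow_mul]; norm_num
    linear_combination ((-1:ℤ)^(k+1) * s) * hcas + (s:ℤ) * hsq
  have hpeq : a * Nat.fib (k+2) + b * Nat.fib (k+1) = p := by
    rw [ha, hb]
    have hsq : ((-1:ℤ)^(k+1)) * ((-1:ℤ)^(k+1)) = 1 := by
      rw [← pow_add, show (k+1)+(k+1) = 2*(k+1) by ring, pow_mul]; norm_num
    linear_combination ((-1:ℤ)^(k+1) * p) * hcas + p * hsq
  -- real identity: s*phi - p = -psi^k * (a*psi + b)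
  have hf1 := fib_phi k
  have hf2 := fib_phi (k+1)
  have key : (s:ℝ) * phi - p = -psi^k * ((a:ℝ) * psi + b) := by
    have hs' : ((a:ℝ)) * Nat.fib (k+1) + b * Nat.fib k = s := by exact_mod_cast congrArg (Int.cast : ℤ → ℝ) hseq
    have hp' : ((a:ℝ)) * Nat.fib (k+2) + b * Nat.fib (k+1) = p := by exact_mod_cast congrArg (Int.cast : ℤ → ℝ) hpeq
    rw [pow_succ] at hf2
    linear_combination (-phi) * hs' + hp' + (a:ℝ) * hf2 + (b:ℝ) * hf1
  clear_value a b
  have hone : 1 ≤ |(a:ℝ) * psi + b| := by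
    have hF1 : (1:ℤ) ≤ Nat.fib (k+1) := by exact_mod_cast Nat.fib_pos.mpr (Nat.succ_pos k)
    have hF0 : (0:ℤ) ≤ Nat.fib k := Int.ofNat_nonneg _
    have hsl : (1:ℤ) ≤ s := by exact_mod_cast hs1
    have hsu : (s:ℤ) < Nat.fib (k+1) := by exact_mod_cast hs2
    have hp1 := psi_neg
    have hp2 := psi_gt
    rcases lt_trichotomy a 0 with haneg | hazero | hapos
    · rcases lt_trichotomy b 0 with hbneg | hbzero | hbpos
      · -- a<0, b<0: s ≤ -(F_{k+1}+F_k) contradiction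
        exfalso
        have : a ≤ -1 := by omega
        have : b ≤ -1 := by omega
        nlinarith [hseq]
      · -- b = 0, a<0: s = a F_{k+1} < 0 contradiction
        exfalso
        have ha1 : a ≤ -1 := by omega
        rw [hbzero] at hseq
        nlinarith [hseq]
      · -- a<0, b>0 : a*psi > 0, value ≥ b ≥ 1
        have ha1 : (a:ℝ) ≤ -1 := by exact_mod_cast (by omega : a ≤ -1)
        have hb1 : (1:ℝ) ≤ (b:ℝ) := by exact_mod_cast (by omega : 1 ≤ b)
        have : (1:ℝ) ≤ (a:ℝ) * psi + b := by nlinarith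
        calc (1:ℝ) ≤ (a:ℝ)*psi + b := this
          _ ≤ |(a:ℝ)*psi + b| := le_abs_self _
    · rcases eq_or_ne b 0 with hbzero | hbne
      · exfalso; rw [hazero, hbzero] at hseq; simp at hseq; omega
      · have h1b : (1:ℝ) ≤ |(b:ℝ)| := by
          rcases (by omega : 1 ≤ b ∨ b ≤ -1) with h | h
          · have : (1:ℝ) ≤ (b:ℝ) := by exact_mod_cast h
            calc (1:ℝ) ≤ (b:ℝ) := this
              _ ≤ |(b:ℝ)| := le_abs_self _
          · have : (b:ℝ) ≤ -1 := by exact_mod_cast h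
            calc (1:ℝ) ≤ -(b:ℝ) := by linarith
              _ ≤ |(b:ℝ)| := neg_le_abs _
        simpa [hazero] using h1b
    · rcases lt_trichotomy b 0 with hbneg | hbzero | hbpos
      · -- a>0, b<0: a*psi<0, value ≤ -1
        have ha1 : (1:ℝ) ≤ (a:ℝ) := by exact_mod_cast (by omega : 1 ≤ a)
        have hb1 : (b:ℝ) ≤ -1 := by exact_mod_cast (by omega : b ≤ -1)
        have : (a:ℝ)*psi + b ≤ -1 := by nlinarith
        calc (1:ℝ) ≤ -((a:ℝ)*psi + b) := by linarith
          _ ≤ |(a:ℝ)*psi + b| := neg_le_abs _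
      · exfalso
        have ha1 : 1 ≤ a := by omega
        rw [hbzero] at hseq
        nlinarith [hseq]
      · exfalso
        have : 1 ≤ a := by omega
        have : 1 ≤ b := by omega
        nlinarith [hseq]
  rw [key]
  rw [abs_mul, abs_neg, abs_pow, abs_of_neg psi_neg]
  nlinarith [pow_nonneg (by linarith [psi_neg, psi_gt] : (0:ℝ) ≤ -psi) k, hone]

lemma shift (k s : ℕ) (hs1 : 1 ≤ s) (hs2 : s + 1 ≤ Nat.fib (k+1)) :
    ⌊((Nat.fib k : ℝ) + s) * phi⌋ = (Nat.fib (k+1) : ℤ) + ⌊(s:ℝ) * phi⌋ := by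
  set p := ⌊(s:ℝ)*phi⌋ with hp
  have hfl := Int.floor_le ((s:ℝ)*phi)
  have hlt := Int.lt_floor_add_one ((s:ℝ)*phi)
  rw [← hp] at hfl hlt
  have h1 := norm_bound k s p hs1 hs2
  have h2 := norm_bound k s (p+1) hs1 hs2
  have hr1 : |(s:ℝ)*phi - p| = (s:ℝ)*phi - p := abs_of_nonneg (by linarith)
  have hr2 : |(s:ℝ)*phi - ((p+1 : ℤ):ℝ)| = ((p:ℝ) + 1) - (s:ℝ)*phi := by
    rw [abs_of_nonpos] <;> push_cast <;> linarith
  rw [hr1] at h1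
  rw [hr2] at h2
  have hfib := fib_phi k
  have hexp : ((Nat.fib k : ℝ) + s) * phi = ((Nat.fib (k+1) : ℤ):ℝ) + ((s:ℝ)*phi - psi^k) := by
    push_cast
    linear_combination hfib
  rw [hexp, Int.floor_intCast_add]
  congr 1
  have hpow_pos : (0:ℝ) < (-psi)^k := pow_pos (by linarith [psi_neg]) k
  have hne : (s:ℝ)*phi - psi^k ≠ ((p:ℝ) + 1) := by
    intro hcontra
    have hfs : ((Nat.fib k + s : ℕ):ℝ) * phi = ((Nat.fib (k+1) : ℤ) + (p + 1) : ℤ) := by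
      push_cast
      push_cast at hexp
      linarith [hexp]
    exact mul_phi_ne_int (Nat.fib k + s) (by omega) _ hfs
  rw [Int.floor_eq_iff]
  rcases Nat.even_or_odd k with hk | hk
  · have hpk : (-psi)^k = psi^k := hk.neg_pow psi
    constructor
    · push_cast; linarith [h1, hpk]
    · push_cast; linarith [hlt, hpow_pos, hpk]
  · have hpk : (-psi)^k = -psi^k := hk.neg_pow psi
    constructor
    · push_cast; linarith [hfl, hpow_pos, hpk]
    · push_cast
      have hle : (s:ℝ)*phi - psi^k ≤ (p:ℝ) + 1 := by linarith [h2, hpk]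
      exact lt_of_le_of_ne hle hne

lemma fibWord_append : ∀ n, fibWord (n+2) = fibWord (n+1) ++ fibWord n
  | 0 => rfl
  | (n+1) => by
      show (fibWord (n+2)).flatMap subst = fibWord (n+2) ++ fibWord (n+1)
      conv_lhs => rw [fibWord_append n]
      rw [List.flatMap_append]
      rfl

lemma fibWord_length : ∀ n, (fibWord n).length = Nat.fib (n+1)
  | 0 => rfl
  | 1 => rfl
  | (n+2) => by
      rw [fibWord_append, List.length_append, fibWord_length (n+1), fibWord_length n]
      have h := Nat.fib_add_two (n := n+1)
      have e1 : Nat.fib (n+1+2) = Nat.fib (n+2+1) := by congr 1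
      have e2 : Nat.fib (n+1+1) = Nat.fib (n+2) := by congr 1
      omega

lemma floor_phi : ⌊phi⌋ = 1 := by
  rw [Int.floor_eq_iff]
  unfold phi
  constructor <;> nlinarith [sqrt5_gt, sqrt5_lt]

lemma floor_2phi : ⌊(2:ℝ)*phi⌋ = 3 := by
  rw [Int.floor_eq_iff]
  unfold phi
  constructor <;> nlinarith [sqrt5_gt, sqrt5_lt]

lemma floor_3phi : ⌊(3:ℝ)*phi⌋ = 4 := by
  rw [Int.floor_eq_iff]
  unfold phi
  constructor <;> nlinarith [sqrt5_gt, sqrt5_lt]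

lemma fib3_le (n : ℕ) : 2 ≤ Nat.fib (n+3) := by
  calc 2 = Nat.fib 3 := rfl
    _ ≤ Nat.fib (n+3) := Nat.fib_mono (by omega)

lemma main' : ∀ n t, 1 ≤ t → t ≤ Nat.fib (n+2) →
    ((fibWord (n+1)).getD (t-1) 0 : ℤ) = ⌊((t:ℝ)+1) * phi⌋ - ⌊(t:ℝ) * phi⌋
  | 0, t, ht1, ht2 => by
      have ht : t = 1 := by have h2 : Nat.fib (0+2) = 1 := rfl; omega
      subst ht
      have hL : ((fibWord (0+1)).getD (1-1) 0 : ℤ) = 2 := by decide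
      rw [hL, Nat.cast_one, show (1:ℝ)+1 = 2 by norm_num, one_mul, floor_2phi, floor_phi]
      norm_num
  | 1, t, ht1, ht2 => by
      have h2 : Nat.fib 3 = 2 := rfl
      rw [h2] at ht2
      interval_cases t
      · have hL : ((fibWord (1+1)).getD (1-1) 0 : ℤ) = 2 := by decide
        rw [hL, Nat.cast_one, show (1:ℝ)+1 = 2 by norm_num, one_mul, floor_2phi, floor_phi]
        norm_num
      · have hL : ((fibWord (1+1)).getD (2-1) 0 : ℤ) = 1 := by decide
        rw [hL, show ((2:ℕ):ℝ) = 2 by norm_num, show (2:ℝ)+1 = 3 by norm_num,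
          floor_3phi, floor_2phi]
        norm_num
  | (n+2), t, ht1, ht2 => by
      have hL : (fibWord (n+2)).length = Nat.fib (n+3) := by
        rw [fibWord_length]
      have ht2' : t ≤ Nat.fib (n+2) + Nat.fib (n+3) := by
        have h4 : Nat.fib (n+2+2) = Nat.fib (n+2) + Nat.fib (n+2+1) := Nat.fib_add_two
        have e : Nat.fib (n+2+1) = Nat.fib (n+3) := by congr 1
        omega
      have hf43 : Nat.fib (n+3+1) = Nat.fib (n+2) + Nat.fib (n+3) := by
        rw [show n+3+1 = (n+2)+2 by omega, Nat.fib_add_two]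
      rw [show n+2+1 = (n+1)+2 from rfl, fibWord_append (n+1)]
      by_cases h : t ≤ Nat.fib (n+3)
      · rw [List.getD_append _ _ _ _ (by rw [hL]; omega)]
        exact main' (n+1) t ht1 h
      · push_neg at h
        rw [List.getD_append_right _ _ _ _ (by rw [hL]; omega)]
        have e : t - 1 - (fibWord (n+2)).length = (t - Nat.fib (n+3)) - 1 := by
          rw [hL]; omega
        rw [e]
        set t' := t - Nat.fib (n+3) with ht'
        have ht'1 : 1 ≤ t' := by omega
        have ht'2 : t' ≤ Nat.fib (n+2) := by omega
        rw [main' n t' ht'1 ht'2]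
        have h32 := fib3_le n
        have s1 := shift (n+3) t' ht'1 (by omega)
        have s2 := shift (n+3) (t'+1) (by omega) (by omega)
        have htt : (t:ℝ) = (Nat.fib (n+3) : ℝ) + t' := by
          have heq : t = Nat.fib (n+3) + t' := by omega
          rw [heq]; push_cast; ring
        rw [htt,
          show ((Nat.fib (n+3):ℝ) + (t':ℝ) + 1) * phi
            = ((Nat.fib (n+3):ℝ) + ((t'+1 : ℕ):ℝ)) * phi by push_cast; ring,
          s2, s1]
        push_cast
        ring

theorem stmt6 (n t : ℕ) (hn : 1 ≤ n) (ht1 : 1 ≤ t) (ht2 : t ≤ Nat.fib n) :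
    ((fibWord (n - 1)).getD (t - 1) 0 : ℤ) =
      ⌊((Nat.fib (n + 1) : ℝ) + t + 1) * phi⌋ - ⌊((Nat.fib (n + 1) : ℝ) + t) * phi⌋ := by
  match n, hn, ht2 with
  | 1, _, ht2 =>
    have ht : t = 1 := by have h1 : Nat.fib 1 = 1 := rfl; omega
    subst ht
    have hL : ((fibWord (1-1)).getD (1-1) 0 : ℤ) = 1 := by decide
    rw [hL]
    have h2 : (Nat.fib (1+1) : ℝ) = 1 := by norm_num [Nat.fib]
    rw [h2, Nat.cast_one, show (1:ℝ)+1+1 = 3 by norm_num, show (1:ℝ)+1 = 2 by norm_num,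
      floor_3phi, floor_2phi]
    norm_num
  | (m+2), _, ht2 =>
    have e2 : m+2-1 = m+1 := by omega
    have e3 : m+2+1 = m+3 := by omega
    rw [e2, e3]
    rw [main' m t ht1 ht2]
    have h32 := fib3_le m
    have hf43 : Nat.fib (m+3+1) = Nat.fib (m+2) + Nat.fib (m+3) := by
      rw [show m+3+1 = (m+2)+2 by omega, Nat.fib_add_two]
    have s1 := shift (m+3) t ht1 (by omega)
    have s2 := shift (m+3) (t+1) (by omega) (by omega)
    rw [show ((Nat.fib (m+3):ℝ) + (t:ℝ) + 1) * phi
          = ((Nat.fib (m+3):ℝ) + ((t+1 : ℕ):ℝ)) * phi by push_cast; ring,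
      s2, s1]
    push_cast
    ring
end

section
/- With a_n = 6 + Σ_{i=1}^{n−1} c_i, where {c_n} is the concatenation of the 5-fold repeated Fibonacci-substitution words, we have a_{5F_{n+2}−4} = 5F_{n+3} − 4 for all n ≥ 1. -/
def Wlist (n : ℕ) : List ℕ :=
  (List.range n).flatMap fun i => (List.replicate 5 (fibWord i)).flatten

lemma flatMap_facts (l : List ℕ) (h : ∀ x ∈ l, x = 1 ∨ x = 2) :
    (l.flatMap subst).length = l.sum ∧ (l.flatMap subst).sum = l.sum + l.length := by
  induction l with
  | nil => simp
  | cons a t ih =>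
    have ha : (subst a).length = a ∧ (subst a).sum = a + 1 := by
      rcases h a (by simp) with rfl | rfl <;> simp [subst]
    have ih' := ih (fun x hx => h x (by simp [hx]))
    rw [List.flatMap_cons]
    constructor
    · simp [ha.1, ih'.1]
    · simp [ha.2, ih'.2]; omega

lemma mem_fibWord (n : ℕ) : ∀ x ∈ fibWord n, x = 1 ∨ x = 2 := by
  induction n with
  | zero => simp [fibWord]
  | succ n ih =>
    intro x hx
    rw [show fibWord (n+1) = (fibWord n).flatMap subst from rfl, List.mem_flatMap] at hx
    obtain ⟨y, hy, hxy⟩ := hx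
    rcases ih y hy with rfl | rfl <;> simp [subst] at hxy <;> omega

lemma fibWord_facts (n : ℕ) :
    (fibWord n).length = Nat.fib (n+1) ∧ (fibWord n).sum = Nat.fib (n+2) := by
  induction n with
  | zero => simp [fibWord]
  | succ n ih =>
    have h := flatMap_facts (fibWord n) (mem_fibWord n)
    have hw : fibWord (n+1) = (fibWord n).flatMap subst := rfl
    have e1 : Nat.fib (n+1+2) = Nat.fib (n+2) + Nat.fib (n+1) := by
      rw [show n+1+2 = (n+1)+2 from rfl, Nat.fib_add_two, show n+1+1 = n+2 from rfl,
        Nat.add_comm]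
    constructor
    · rw [hw, h.1, ih.2]
    · rw [hw, h.2, ih.1, ih.2, e1]

lemma block_facts (i : ℕ) :
    ((List.replicate 5 (fibWord i)).flatten).length = 5 * Nat.fib (i+1) ∧
    ((List.replicate 5 (fibWord i)).flatten).sum = 5 * Nat.fib (i+2) := by
  have h := fibWord_facts i
  have : (List.replicate 5 (fibWord i)).flatten
      = fibWord i ++ (fibWord i ++ (fibWord i ++ (fibWord i ++ (fibWord i ++ [])))) := by
    simp [List.replicate]
  rw [this]
  simp [h.1, h.2]
  omega

lemma Wlist_succ (n : ℕ) :
    Wlist (n+1) = Wlist n ++ (List.replicate 5 (fibWord n)).flatten := by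
  unfold Wlist
  rw [List.range_succ, List.flatMap_append]
  simp

lemma Wlist_facts (n : ℕ) :
    (Wlist n).length + 5 = 5 * Nat.fib (n+2) ∧ (Wlist n).sum + 10 = 5 * Nat.fib (n+3) := by
  induction n with
  | zero => exact ⟨rfl, rfl⟩
  | succ n ih =>
    rw [Wlist_succ]
    have hb := block_facts n
    have h2 : Nat.fib (n+3) = Nat.fib (n+2) + Nat.fib (n+1) := by
      rw [show n+3 = (n+1)+2 from rfl, Nat.fib_add_two, show n+1+1 = n+2 from rfl,
        Nat.add_comm]
    have h3 : Nat.fib (n+4) = Nat.fib (n+3) + Nat.fib (n+2) := by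
      rw [show n+4 = (n+2)+2 from rfl, Nat.fib_add_two, show n+2+1 = n+3 from rfl,
        Nat.add_comm]
    simp only [show n+1+2 = n+3 from rfl, show n+1+3 = n+4 from rfl]
    constructor
    · rw [List.length_append, hb.1]; omega
    · rw [List.sum_append, hb.2]; omega

lemma fib_lb (n : ℕ) : n + 1 ≤ Nat.fib (n+2) := by
  induction n with
  | zero => simp
  | succ n ih =>
    have h2 : Nat.fib (n+3) = Nat.fib (n+2) + Nat.fib (n+1) := by
      rw [show n+3 = (n+1)+2 from rfl, Nat.fib_add_two, show n+1+1 = n+2 from rfl,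
        Nat.add_comm]
    have : 0 < Nat.fib (n+1) := Nat.fib_pos.2 (by omega)
    simp only [show n+1+1 = n+2 from rfl, show n+1+2 = n+3 from rfl]
    omega

lemma Wlist_prefix {i n : ℕ} (h : i ≤ n) : Wlist i <+: Wlist n := by
  obtain ⟨d, rfl⟩ := Nat.exists_eq_add_of_le h
  unfold Wlist
  rw [List.range_add, List.flatMap_append]
  exact List.prefix_append _ _

lemma cseq_eq {i n : ℕ} (h1 : 1 ≤ i) (h2 : i - 1 < (Wlist n).length) :
    cseq 5 i = (Wlist n).getD (i-1) 0 := by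
  have hself : i - 1 < (Wlist i).length := by
    have h := (Wlist_facts i).1
    have hb := fib_lb i
    omega
  have hc : cseq 5 i = (Wlist i).getD (i-1) 0 := rfl
  rcases le_total i n with h | h
  · obtain ⟨t, ht⟩ := Wlist_prefix h
    rw [hc, ← ht, List.getD_append _ _ _ _ hself]
  · obtain ⟨t, ht⟩ := Wlist_prefix h
    rw [hc, ← ht, List.getD_append _ _ _ _ h2]

lemma sum_getD (l : List ℕ) : ∑ j ∈ Finset.range l.length, l.getD j 0 = l.sum := by
  induction l with
  | nil => simp
  | cons a t ih =>
    rw [List.length_cons, Finset.sum_range_succ']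
    simp only [List.getD_cons_succ, List.getD_cons_zero, List.sum_cons, ih]
    omega

theorem stmt9 (n : ℕ) (hn : 1 ≤ n) :
    aseq 5 (5 * Nat.fib (n + 2) - 4) = 5 * Nat.fib (n + 3) - 4 := by
  have hfib : n + 1 ≤ Nat.fib (n+2) := fib_lb n
  have hL : (Wlist n).length + 5 = 5 * Nat.fib (n+2) := (Wlist_facts n).1
  have hS : (Wlist n).sum + 10 = 5 * Nat.fib (n+3) := (Wlist_facts n).2
  have hidx : 5 * Nat.fib (n + 2) - 4 = (Wlist n).length + 1 := by omega
  rw [aseq, hidx]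
  have hsum : ∑ i ∈ Finset.Ico 1 ((Wlist n).length + 1), cseq 5 i = (Wlist n).sum := by
    rw [Finset.sum_Ico_eq_sum_range]
    have h1 : (Wlist n).length + 1 - 1 = (Wlist n).length := rfl
    rw [h1, ← sum_getD (Wlist n)]
    apply Finset.sum_congr rfl
    intro j hj
    rw [Finset.mem_range] at hj
    have := cseq_eq (i := 1 + j) (n := n) (by omega) (by omega)
    rw [this]
    congr 1
    omega
  rw [hsum]
  omega
end

section
/- With b_n = 12 + Σ_{i=1}^{n−1} (c_i + 1), where {c_n} is the concatenation of the 5-fold repeated Fibonacci-substitution words, we have b_{5F_{n+1}−4} = 5F_{n+3} − 3 for all n ≥ 1. -/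
lemma flatMap_subst_len_sum {l : List ℕ} (h : ∀ x ∈ l, x = 1 ∨ x = 2) :
    (l.flatMap subst).length = l.sum ∧ (l.flatMap subst).sum = l.length + l.sum := by
  induction l with
  | nil => simp
  | cons a t ih =>
    obtain ⟨h1, h2⟩ := ih (fun x hx => h x (List.mem_cons_of_mem a hx))
    rcases h a List.mem_cons_self with rfl | rfl
    · refine ⟨?_, ?_⟩ <;> simp [List.flatMap_cons, subst, h1, h2] <;> try omega
    · refine ⟨?_, ?_⟩ <;> simp [List.flatMap_cons, subst, h1, h2] <;> try omega

lemma fibWord_mem : ∀ n, ∀ x ∈ fibWord n, x = 1 ∨ x = 2 := by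
  intro n
  induction n with
  | zero => intro x hx; simp [fibWord] at hx; exact Or.inl hx
  | succ m ih =>
    intro x hx
    simp only [fibWord, List.mem_flatMap] at hx
    obtain ⟨a, ha, hxa⟩ := hx
    rcases ih a ha with rfl | rfl <;> simp [subst] at hxa <;> omega

lemma fibWord_len_sum : ∀ n, (fibWord n).length = Nat.fib (n + 1) ∧
    (fibWord n).sum = Nat.fib (n + 2) := by
  intro n
  induction n with
  | zero => simp [fibWord]
  | succ m ih =>
    obtain ⟨h1, h2⟩ := ih
    obtain ⟨g1, g2⟩ := flatMap_subst_len_sum (fibWord_mem m)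
    have e1 : Nat.fib (m + 3) = Nat.fib (m + 1) + Nat.fib (m + 2) := Nat.fib_add_two
    refine ⟨?_, ?_⟩
    · show ((fibWord m).flatMap subst).length = Nat.fib (m + 2)
      omega
    · show ((fibWord m).flatMap subst).sum = Nat.fib (m + 3)
      omega

/-- The prefix list of the infinite word. -/
def Lm (m : ℕ) : List ℕ :=
  (List.range m).flatMap fun i => (List.replicate 5 (fibWord i)).flatten

lemma Lm_succ (m : ℕ) : Lm (m + 1) = Lm m ++ (List.replicate 5 (fibWord m)).flatten := by
  simp [Lm, List.range_succ]

lemma Lm_prefix {a b : ℕ} (h : a ≤ b) : Lm a <+: Lm b := by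
  induction b with
  | zero => simp_all
  | succ c ih =>
    rcases Nat.lt_or_ge a (c + 1) with hc | hc
    · exact (ih (Nat.lt_succ_iff.mp hc)).trans ⟨_, (Lm_succ c).symm⟩
    · have : a = c + 1 := le_antisymm h hc
      subst this; exact List.prefix_refl _

lemma block_len (c : ℕ) : ((List.replicate 5 (fibWord c)).flatten).length = 5 * Nat.fib (c + 1) := by
  simp [List.length_flatten, (fibWord_len_sum c).1, List.map_replicate]
  try omega

lemma block_sum (c : ℕ) : ((List.replicate 5 (fibWord c)).flatten).sum = 5 * Nat.fib (c + 2) := by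
  simp [List.sum_flatten, (fibWord_len_sum c).2, List.map_replicate]
  try omega

lemma Lm_len (m : ℕ) : (Lm m).length + 5 = 5 * Nat.fib (m + 2) := by
  induction m with
  | zero => simp [Lm]
  | succ c ih =>
    have e1 : Nat.fib (c + 3) = Nat.fib (c + 1) + Nat.fib (c + 2) := Nat.fib_add_two
    show (Lm (c + 1)).length + 5 = 5 * Nat.fib (c + 3)
    rw [Lm_succ, List.length_append, block_len]
    omega

lemma Lm_sum (m : ℕ) : (Lm m).sum + 10 = 5 * Nat.fib (m + 3) := by
  induction m with
  | zero => show 0 + 10 = 5 * Nat.fib 3; simp [Lm]; rfl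
  | succ c ih =>
    have e1 : Nat.fib (c + 4) = Nat.fib (c + 2) + Nat.fib (c + 3) := Nat.fib_add_two
    show (Lm (c + 1)).sum + 10 = 5 * Nat.fib (c + 4)
    rw [Lm_succ, List.sum_append, block_sum]
    omega

lemma fib_ge (i : ℕ) : i + 1 ≤ Nat.fib (i + 2) := by
  induction i with
  | zero => simp
  | succ c ih =>
    have e1 : Nat.fib (c + 3) = Nat.fib (c + 1) + Nat.fib (c + 2) := Nat.fib_add_two
    have p : 0 < Nat.fib (c + 1) := Nat.fib_pos.mpr (by omega)
    show c + 2 ≤ Nat.fib (c + 3)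
    omega

lemma Lm_len_ge (i : ℕ) (hi : 1 ≤ i) : i ≤ (Lm i).length := by
  have h1 := Lm_len i
  have h2 := fib_ge i
  omega

lemma cseq_eq_getD {i M : ℕ} (hi : 1 ≤ i) (hiM : i ≤ (Lm M).length) :
    cseq 5 i = (Lm M).getD (i - 1) 0 := by
  have hdef : cseq 5 i = (Lm i).getD (i - 1) 0 := rfl
  rw [hdef]
  rcases Nat.le_total i M with h | h
  · have hpre := Lm_prefix h
    have hlen : i - 1 < (Lm i).length := by have := Lm_len_ge i hi; omega
    rw [List.getD_eq_getElem _ _ hlen,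
      List.getD_eq_getElem _ _ (hlen.trans_le hpre.length_le), hpre.getElem hlen]
  · have hpre := Lm_prefix h
    have hlen : i - 1 < (Lm M).length := by omega
    rw [List.getD_eq_getElem _ _ hlen,
      List.getD_eq_getElem _ _ (hlen.trans_le hpre.length_le), (hpre.getElem hlen).symm]

theorem stmt10 (n : ℕ) (hn : 1 ≤ n) :
    bseq 5 (5 * Nat.fib (n + 1) - 4) = 5 * Nat.fib (n + 3) - 3 := by
  obtain ⟨m, rfl⟩ : ∃ m, n = m + 1 := ⟨n - 1, by omega⟩
  have hlen : (Lm m).length + 5 = 5 * Nat.fib (m + 1 + 1) := Lm_len m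
  have hsum : (Lm m).sum + 10 = 5 * Nat.fib (m + 1 + 2) := Lm_sum m
  have hfib3 : Nat.fib (m + 1 + 3) = Nat.fib (m + 1 + 1) + Nat.fib (m + 1 + 2) :=
    Nat.fib_add_two
  have hfibpos : 1 ≤ Nat.fib (m + 1 + 1) := Nat.fib_pos.mpr (by omega)
  set N := 5 * Nat.fib (m + 1 + 1) - 4 with hN
  have hN1 : N - 1 = (Lm m).length := by omega
  have hNge : 1 ≤ N := by omega
  have hsumc : ∑ i ∈ Finset.Ico 1 N, cseq 5 i = (Lm m).sum := by
    rw [Finset.sum_Ico_eq_sum_range, hN1, ← sum_getD (Lm m)]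
    apply Finset.sum_congr rfl
    intro j hj
    simp only [Finset.mem_range] at hj
    rw [cseq_eq_getD (M := m) (by omega) (by omega)]
    congr 1
    omega
  have hcard : ∑ i ∈ Finset.Ico 1 N, (cseq 5 i + 1) =
      (∑ i ∈ Finset.Ico 1 N, cseq 5 i) + (N - 1) := by
    rw [Finset.sum_add_distrib, Finset.sum_const, Nat.card_Ico, smul_eq_mul, mul_one]
  rw [bseq, hcard, hsumc]
  omega
end

section
/- Define a_n and b_n as in the k = 5 construction (a₁ = 6, b₁ = 12, with difference sequences c_n ∈ {1,2} and d_n = c_n + 1 coming from concatenated 5-fold Fibonacci-substitution words). Then the sets {a_n : n ≥ 1} and {b_n : n ≥ 1} are disjoint. -/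
namespace Stmt11

def W (N : ℕ) : List ℕ :=
  (List.range N).flatMap fun i => (List.replicate 5 (fibWord i)).flatten

lemma W_succ (N : ℕ) : W (N + 1) = W N ++ (List.replicate 5 (fibWord N)).flatten := by
  simp [W, List.range_succ]

lemma fibWord_mem : ∀ i, ∀ x ∈ fibWord i, x = 1 ∨ x = 2 := by
  intro i
  induction i with
  | zero => simp [fibWord]
  | succ n ih =>
    intro x hx
    simp only [fibWord, List.mem_flatMap] at hx
    obtain ⟨y, hy, hx⟩ := hx
    rcases ih y hy with h | h <;> subst h <;> simp [subst] at hx <;> tauto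

lemma fibWord_ne_nil (i : ℕ) : fibWord i ≠ [] := by
  induction i with
  | zero => simp [fibWord]
  | succ n ih =>
    obtain ⟨a, t, ht⟩ := List.exists_cons_of_ne_nil ih
    have ha : a = 1 ∨ a = 2 := fibWord_mem n a (by rw [ht]; simp)
    show (fibWord n).flatMap subst ≠ []
    rw [ht, List.flatMap_cons]
    rcases ha with h | h <;> subst h <;> simp [subst]

lemma W_mem (N : ℕ) : ∀ x ∈ W N, x = 1 ∨ x = 2 := by
  intro x hx
  simp only [W, List.mem_flatMap, List.mem_flatten, List.mem_replicate, List.mem_range] at hx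
  obtain ⟨i, _, l, ⟨_, rfl⟩, hx⟩ := hx
  exact fibWord_mem i x hx

lemma length_W (N : ℕ) : N ≤ (W N).length := by
  induction N with
  | zero => simp [W]
  | succ n ih =>
    rw [W_succ, List.length_append]
    have : 1 ≤ ((List.replicate 5 (fibWord n)).flatten).length := by
      simp only [List.length_flatten, List.map_replicate, List.sum_replicate, smul_eq_mul]
      have := fibWord_ne_nil n
      have : 1 ≤ (fibWord n).length := by
        cases h : fibWord n with
        | nil => exact absurd h (fibWord_ne_nil n)
        | cons a t => simp
      omega
    omega

lemma W_prefix {N M : ℕ} (h : N ≤ M) : W N <+: W M := by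
  induction M with
  | zero =>
    have : N = 0 := by omega
    subst this; exact List.prefix_refl _
  | succ k ih =>
    rcases Nat.lt_or_ge N (k+1) with h' | h'
    · exact (ih (by omega)).trans ⟨_, (W_succ k).symm⟩
    · have : N = k + 1 := by omega
      subst this; exact List.prefix_refl _

lemma getD_prefix {l l' : List ℕ} (h : l <+: l') {n : ℕ} (hn : n < l.length) :
    l'.getD n 0 = l.getD n 0 := by
  obtain ⟨t, rfl⟩ := h
  rw [List.getD_eq_getElem _ _ hn, List.getD_eq_getElem _ _ (by
    rw [List.length_append]; omega)]
  exact List.getElem_append_left hn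


lemma subst_length {x : ℕ} (h : x = 1 ∨ x = 2) : (subst x).length = x := by
  rcases h with h | h <;> subst h <;> rfl

lemma subst_sum {x : ℕ} (h : x = 1 ∨ x = 2) : (subst x).sum = x + 1 := by
  rcases h with h | h <;> subst h <;> rfl

lemma length_flatMap : ∀ l : List ℕ, (∀ x ∈ l, x = 1 ∨ x = 2) →
    (l.flatMap subst).length = l.sum := by
  intro l
  induction l with
  | nil => simp
  | cons a t ih =>
    intro h
    rw [List.flatMap_cons, List.length_append, List.sum_cons,
      subst_length (h a (by simp)), ih (fun x hx => h x (by simp [hx]))]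

lemma sum_flatMap : ∀ l : List ℕ, (∀ x ∈ l, x = 1 ∨ x = 2) →
    (l.flatMap subst).sum = l.sum + l.length := by
  intro l
  induction l with
  | nil => simp
  | cons a t ih =>
    intro h
    rw [List.flatMap_cons, List.sum_append, List.sum_cons,
      subst_sum (h a (by simp)), ih (fun x hx => h x (by simp [hx])),
      List.length_cons]
    ring

lemma take_flatMap {l : List ℕ} (h : ∀ x ∈ l, x = 1 ∨ x = 2) {j : ℕ} :
    (l.flatMap subst).take ((l.take j).sum) = (l.take j).flatMap subst := by
  have hsplit : l.flatMap subst = (l.take j).flatMap subst ++ (l.drop j).flatMap subst := by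
    rw [← List.flatMap_append, List.take_append_drop]
  rw [hsplit, List.take_left' (length_flatMap _ (fun x hx => h x (List.mem_of_mem_take hx)))]

lemma getD_flatMap {l : List ℕ} (h : ∀ x ∈ l, x = 1 ∨ x = 2) {j : ℕ} (hj : j < l.length) :
    (l.flatMap subst).getD ((l.take j).sum) 0 = 2 := by
  have hsplit : l.flatMap subst = (l.take j).flatMap subst ++ (l[j] :: l.drop (j+1)).flatMap subst := by
    rw [← List.flatMap_append, ← List.drop_eq_getElem_cons hj, List.take_append_drop]
  have hlen : ((l.take j).flatMap subst).length = (l.take j).sum :=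
    length_flatMap _ (fun x hx => h x (List.mem_of_mem_take hx))
  rw [hsplit]
  rw [List.getD_eq_getElem?_getD, List.getElem?_append_right (by omega), hlen]
  simp only [Nat.sub_self]
  rw [List.flatMap_cons]
  rcases h l[j] (List.getElem_mem hj) with hx | hx <;> rw [hx] <;> simp [subst]


def S (k : ℕ) : ℕ := ∑ i ∈ Finset.Ico 1 (k+1), cseq 5 i

lemma cseq_eq {n M : ℕ} (hn : 1 ≤ n) (hM : n ≤ M) : cseq 5 n = (W M).getD (n-1) 0 := by
  have h1 : n - 1 < (W n).length := lt_of_lt_of_le (by omega) (length_W n)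
  rw [show cseq 5 n = (W n).getD (n-1) 0 from rfl, getD_prefix (W_prefix hM) h1]

lemma S_succ (k : ℕ) : S (k+1) = S k + cseq 5 (k+1) :=
  Finset.sum_Ico_succ_top (by omega) _

lemma S_eq_take {k M : ℕ} (h : k ≤ M) : S k = ((W M).take k).sum := by
  induction k with
  | zero => simp [S]
  | succ j ih =>
    have hjlt : j < (W M).length := lt_of_lt_of_le (by omega) (length_W M)
    have : (W M).take (j+1) = (W M).take j ++ [(W M)[j]] := by
      rw [List.take_succ, List.getElem?_eq_getElem hjlt]; rfl
    rw [S_succ, ih (by omega), cseq_eq (by omega) h, this, List.sum_append]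
    simp [List.getD_eq_getElem _ _ hjlt, List.getElem?_eq_getElem hjlt]

lemma cseq_one_or_two {n : ℕ} (hn : 1 ≤ n) : cseq 5 n = 1 ∨ cseq 5 n = 2 := by
  have h1 : n - 1 < (W n).length := lt_of_lt_of_le (by omega) (length_W n)
  rw [cseq_eq hn (le_refl n), List.getD_eq_getElem _ _ h1]
  exact W_mem n _ (List.getElem_mem h1)

lemma S_strictMono : StrictMono S := by
  apply strictMono_nat_of_lt_succ
  intro k
  have := cseq_one_or_two (n := k+1) (by omega)
  rw [S_succ]; omega

lemma flatten_replicate_flatMap (w : List ℕ) :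
    ((List.replicate 5 w).flatten).flatMap subst
      = (List.replicate 5 (w.flatMap subst)).flatten := by
  show ((w ++ (w ++ (w ++ (w ++ (w ++ []))))) : List ℕ).flatMap subst = _
  simp [List.flatMap_append]

lemma W_succ_subst (N : ℕ) : W (N+1) = [1,1,1,1,1] ++ (W N).flatMap subst := by
  induction N with
  | zero => rfl
  | succ n ih =>
    have h : (W (n+1)).flatMap subst
        = (W n).flatMap subst ++ (List.replicate 5 (fibWord (n+1))).flatten := by
      rw [W_succ n, List.flatMap_append, flatten_replicate_flatMap]; rfl
    rw [W_succ (n+1), h, ← List.append_assoc, ← ih]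

lemma key_B (p : ℕ) : S (5 + S p) = S p + p + 5 := by
  set M := S p + p + 6 with hM
  have hpM : p ≤ M := by omega
  have hplen : p ≤ (W M).length := le_trans hpM (length_W M)
  have hmem := W_mem M
  have hmemt : ∀ x ∈ (W M).take p, x = 1 ∨ x = 2 :=
    fun x hx => hmem x (List.mem_of_mem_take hx)
  have h1 : S (5 + S p) = ((W (M+1)).take (5 + S p)).sum :=
    S_eq_take (by omega)
  rw [W_succ_subst M] at h1
  have h2 : ([1,1,1,1,1] ++ (W M).flatMap subst).take (5 + S p)
      = [1,1,1,1,1] ++ ((W M).flatMap subst).take (S p) := by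
    rw [List.take_append, List.take_of_length_le (by simp),
      show (5 + S p - ([1,1,1,1,1] : List ℕ).length) = S p by simp]
  have h3 : ((W M).flatMap subst).take (S p) = ((W M).take p).flatMap subst := by
    rw [S_eq_take hpM]; exact take_flatMap hmem
  rw [h1, h2, h3, List.sum_append, sum_flatMap _ hmemt,
    List.length_take, ← S_eq_take hpM]
  simp [min_eq_left hplen]
  omega

lemma key_C (p : ℕ) : cseq 5 (6 + S p) = 2 := by
  set M := S p + p + 6 with hM
  have hplt : p < (W M).length := lt_of_lt_of_le (by omega) (length_W M)
  have hmem := W_mem M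
  rw [cseq_eq (by omega) (show 6 + S p ≤ M + 1 by omega)]
  rw [W_succ_subst M]
  have : (6 + S p - 1) = 5 + S p := by omega
  rw [this, List.getD_eq_getElem?_getD, List.getElem?_append_right (by simp)]
  have h3 : 5 + S p - ([1,1,1,1,1] : List ℕ).length = S p := by simp
  rw [h3, S_eq_take (show p ≤ M by omega), ← List.getD_eq_getElem?_getD]
  exact getD_flatMap hmem hplt

end Stmt11

theorem stmt11 (m n : ℕ) (hm : 1 ≤ m) (hn : 1 ≤ n) : aseq 5 m ≠ bseq 5 n := by
  intro h
  have hm1 : m - 1 + 1 = m := by omega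
  have hn1 : n - 1 + 1 = n := by omega
  have ha : aseq 5 m = 6 + Stmt11.S (m-1) := by
    rw [aseq, Stmt11.S, hm1]
  have hb : bseq 5 n = 12 + Stmt11.S (n-1) + (n-1) := by
    have hsum : ∑ i ∈ Finset.Ico 1 n, (cseq 5 i + 1)
        = (∑ i ∈ Finset.Ico 1 n, cseq 5 i) + (n-1) := by
      rw [Finset.sum_add_distrib, Finset.sum_const, Nat.card_Ico, smul_eq_mul, mul_one]
    rw [bseq, hsum, Stmt11.S, hn1]; omega
  set p := n - 1
  set q := m - 1
  have hq : Stmt11.S q = Stmt11.S p + p + 6 := by omega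
  have hB := Stmt11.key_B p
  have hC := Stmt11.key_C p
  have hs : Stmt11.S (5 + Stmt11.S p + 1) = Stmt11.S (5 + Stmt11.S p) + 2 := by
    rw [Stmt11.S_succ, show 5 + Stmt11.S p + 1 = 6 + Stmt11.S p from by omega, hC]
  have mono := Stmt11.S_strictMono.monotone
  have h1 : q < 5 + Stmt11.S p + 1 := by
    by_contra hcon
    push_neg at hcon
    have := mono hcon
    omega
  have h2 : 5 + Stmt11.S p < q := by
    by_contra hcon
    push_neg at hcon
    have := mono hcon
    omega
  omega
end
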